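/- Let ν ∈ ℝ, let ω₋₁,₁(0), v_{c,1}(0), v_{c,2}(0) ∈ ℂ with v_{c,1}(0) ≠ v_{c,2}(0), and set d = v_{c,1}(0) − v_{c,2}(0). Suppose T > 0 is such that for all t ∈ [0, T) the complex number 1 + 4 ω₋₁,₁(0) t / d lies off the closed negative real axis (so its principal square root is defined and nonvanishing) and v_{c,1}(t) ≠ v_{c,2}(t). Then the functions ω₋₁,₁(t) = ω₋₁,₁(0) / √(1 + 4 ω₋₁,₁(0) t / d), ω₋₁,₂(t) = −ω₋₁,₁(t), v_{c,1}(t) = ν t + (d/2) √(1 + 4 ω₋₁,₁(0) t / d) + (v_{c,1}(0) + v_{c,2}(0))/2, and v_{c,2}(t) = −v_{c,1}(t) + 2 ν t + v_{c,1}(0) + v_{c,2}(0) satisfy, on [0, T), the system d v_{c,1}/dt = ν + ω₋₁,₁, d v_{c,2}/dt = ν + ω₋₁,₂, d ω₋₁,₁/dt = 2 ω₋₁,₁ ω₋₁,₂ / (v_{c,1} − v_{c,2}), and d ω₋₁,₂/dt = 2 ω₋₁,₁ ω₋₁,₂ / (v_{c,2} − v_{c,1}), with the prescribed initial values (and ω₋₁,₂(0)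 = −ω₋₁,₁(0)). -/

import Mathlib

noncomputable section

/-- The quantity `1 + 4 ω₋₁,₁(0) t / d` appearing under the square root,
where `d = v_{c,1}(0) − v_{c,2}(0)`. -/
def radicand (w0 d : ℂ) (t : ℝ) : ℂ := 1 + 4 * w0 * (t : ℂ) / d

/-- Its principal square root. -/
def sqrtRad (w0 d : ℂ) (t : ℝ) : ℂ := radicand w0 d t ^ ((1 : ℂ) / 2)

/-- `ω₋₁,₁(t) = ω₋₁,₁(0)/√(1 + 4 ω₋₁,₁(0) t / d)`. -/
def omOne (w0 d : ℂ) (t : ℝ) : ℂ := w0 / sqrtRad w0 d t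

/-- `v_{c,1}(t) = ν t + (d/2)√(1 + 4 ω₋₁,₁(0) t / d) + (v_{c,1}(0) + v_{c,2}(0))/2`. -/
def vcOne (ν : ℝ) (w0 v10 v20 : ℂ) (t : ℝ) : ℂ :=
  (ν : ℂ) * (t : ℂ) + (v10 - v20) / 2 * sqrtRad w0 (v10 - v20) t + (v10 + v20) / 2

/-- `v_{c,2}(t) = −v_{c,1}(t) + 2 ν t + v_{c,1}(0) + v_{c,2}(0)`. -/
def vcTwo (ν : ℝ) (w0 v10 v20 : ℂ) (t : ℝ) : ℂ :=
  -vcOne ν w0 v10 v20 t + 2 * (ν : ℂ) * (t : ℂ) + v10 + v20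

/-! With `S = √(1 + 4 ω₀ t / d)` one has `S' = 2 ω₀ / (d S)`, `v₁ − v₂ = d S` and `ω = ω₀ / S`,
so `v₁' = ν + ω` and `ω' = −2 ω₀² / (d S³) = 2 ω (−ω) / (v₁ − v₂)`; the equations for
`v₂ = 2 ν t + v₁(0) + v₂(0) − v₁` and `ω₂ = −ω` follow. The branch hypothesis keeps the radicand
in the slit plane, where the principal square root is differentiable. -/

open Complex

theorem HasDerivAt.cpow_one_half {f : ℝ → ℂ} {f' : ℂ} {t : ℝ} (hf : HasDerivAt f f' t)
    (h : f t ∈ slitPlane) :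
    HasDerivAt (fun s => f s ^ (1 / 2 : ℂ)) (f' / (2 * f t ^ (1 / 2 : ℂ))) t := by
  refine ((hasStrictDerivAt_cpow_const h).hasDerivAt.comp t hf).congr_deriv ?_
  rw [show (1 / 2 : ℂ) - 1 = -(1 / 2) by norm_num, cpow_neg]
  field_simp

section PoleDynamics

variable (ν : ℝ) (w0 v10 v20 d : ℂ) (t : ℝ)

lemma sqrtRad_zero : sqrtRad w0 d 0 = 1 := by
  simp [sqrtRad, radicand]

lemma omOne_zero : omOne w0 d 0 = w0 := by
  simp [omOne, sqrtRad_zero]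

lemma vcOne_zero : vcOne ν w0 v10 v20 0 = v10 := by
  simp only [vcOne, sqrtRad_zero]
  push_cast
  ring

lemma vcTwo_zero : vcTwo ν w0 v10 v20 0 = v20 := by
  simp only [vcTwo, vcOne_zero]
  push_cast
  ring

lemma vcOne_sub_vcTwo :
    vcOne ν w0 v10 v20 t - vcTwo ν w0 v10 v20 t = (v10 - v20) * sqrtRad w0 (v10 - v20) t := by
  simp only [vcTwo, vcOne]
  ring

lemma hasDerivAt_radicand : HasDerivAt (radicand w0 d) (4 * w0 / d) t := by
  unfold radicand
  simpa using (((hasDerivAt_id t).ofReal_comp.const_mul (4 * w0)).div_const d).const_add 1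

variable {w0 v10 v20 d t}

lemma sqrtRad_ne_zero (h : radicand w0 d t ∈ slitPlane) : sqrtRad w0 d t ≠ 0 := by
  simpa [sqrtRad, cpow_eq_zero_iff] using slitPlane_ne_zero h

lemma hasDerivAt_sqrtRad (h : radicand w0 d t ∈ slitPlane) :
    HasDerivAt (sqrtRad w0 d) (2 * w0 / (d * sqrtRad w0 d t)) t := by
  refine ((hasDerivAt_radicand w0 d t).cpow_one_half h).congr_deriv ?_
  rw [← sqrtRad]
  field_simp
  ring

lemma hasDerivAt_omOne (h : radicand w0 d t ∈ slitPlane) :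
    HasDerivAt (omOne w0 d) (2 * omOne w0 d t * -omOne w0 d t / (d * sqrtRad w0 d t)) t := by
  have hS := sqrtRad_ne_zero h
  refine ((hasDerivAt_const t w0).div (hasDerivAt_sqrtRad h) hS).congr_deriv ?_
  simp only [omOne]
  field_simp
  ring

lemma hasDerivAt_vcOne (hne : v10 ≠ v20) (h : radicand w0 (v10 - v20) t ∈ slitPlane) :
    HasDerivAt (vcOne ν w0 v10 v20) (ν + omOne w0 (v10 - v20) t) t := by
  have hd : v10 - v20 ≠ 0 := sub_ne_zero.mpr hne
  unfold vcOne
  refine ((((hasDerivAt_id t).ofReal_comp.const_mul (ν : ℂ)).add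
    ((hasDerivAt_sqrtRad h).const_mul ((v10 - v20) / 2))).add_const _).congr_deriv ?_
  simp only [omOne, ofReal_one]
  field_simp

lemma hasDerivAt_vcTwo (hne : v10 ≠ v20) (h : radicand w0 (v10 - v20) t ∈ slitPlane) :
    HasDerivAt (vcTwo ν w0 v10 v20) (ν + -omOne w0 (v10 - v20) t) t := by
  unfold vcTwo
  refine ((((hasDerivAt_vcOne ν hne h).neg.add
    ((hasDerivAt_id t).ofReal_comp.const_mul (2 * ν : ℂ))).add_const v10).add_const
    v20).congr_deriv ?_
  simp only [ofReal_one]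
  ring

end PoleDynamics

theorem stmt16_general (ν : ℝ) (w0 v10 v20 : ℂ) (hne : v10 ≠ v20) (T : ℝ)
    (hbranch : ∀ t ∈ Set.Ico (0 : ℝ) T,
      ¬((radicand w0 (v10 - v20) t).im = 0 ∧ (radicand w0 (v10 - v20) t).re ≤ 0)) :
    omOne w0 (v10 - v20) 0 = w0 ∧
    (-(omOne w0 (v10 - v20) 0)) = -w0 ∧
    vcOne ν w0 v10 v20 0 = v10 ∧
    vcTwo ν w0 v10 v20 0 = v20 ∧
    ∀ t ∈ Set.Ico (0 : ℝ) T,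
      HasDerivWithinAt (vcOne ν w0 v10 v20)
        ((ν : ℂ) + omOne w0 (v10 - v20) t) (Set.Ico (0 : ℝ) T) t ∧
      HasDerivWithinAt (vcTwo ν w0 v10 v20)
        ((ν : ℂ) + -(omOne w0 (v10 - v20) t)) (Set.Ico (0 : ℝ) T) t ∧
      HasDerivWithinAt (omOne w0 (v10 - v20))
        (2 * omOne w0 (v10 - v20) t * (-(omOne w0 (v10 - v20) t)) /
          (vcOne ν w0 v10 v20 t - vcTwo ν w0 v10 v20 t)) (Set.Ico (0 : ℝ) T) t ∧
      HasDerivWithinAt (fun s : ℝ => -(omOne w0 (v10 - v20) s))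
        (2 * omOne w0 (v10 - v20) t * (-(omOne w0 (v10 - v20) t)) /
          (vcTwo ν w0 v10 v20 t - vcOne ν w0 v10 v20 t)) (Set.Ico (0 : ℝ) T) t := by
  refine ⟨omOne_zero .., by rw [omOne_zero], vcOne_zero .., vcTwo_zero .., fun t ht => ?_⟩
  have hslit : radicand w0 (v10 - v20) t ∈ slitPlane := by
    rw [mem_slitPlane_iff, ← not_le, or_comm]
    exact not_and_or.mp (hbranch t ht)
  have hom := hasDerivAt_omOne hslit
  rw [← vcOne_sub_vcTwo ν] at hom
  have hom_neg := hom.neg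
  rw [← div_neg, neg_sub] at hom_neg
  exact ⟨(hasDerivAt_vcOne ν hne hslit).hasDerivWithinAt,
    (hasDerivAt_vcTwo ν hne hslit).hasDerivWithinAt, hom.hasDerivWithinAt,
    hom_neg.hasDerivWithinAt⟩

/-- The explicit formulas (with the principal branch of the complex square root) solve the
two-pair pole-dynamics system for the dissipative gCLM equation on the real line with
`a = 0`, `σ = 1`, in the case `ω₋₁,₁(0) + ω₋₁,₂(0) = 0`: on any interval `[0, T)` on which
`1 + 4 ω₋₁,₁(0) t / d` stays off the closed negative real axis and `v_{c,1}(t) ≠ v_{c,2}(t)`,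
the functions `ω₋₁,₁, ω₋₁,₂ = −ω₋₁,₁, v_{c,1}, v_{c,2}` satisfy
`dv_{c,1}/dt = ν + ω₋₁,₁`, `dv_{c,2}/dt = ν + ω₋₁,₂`,
`dω₋₁,₁/dt = 2 ω₋₁,₁ ω₋₁,₂/(v_{c,1} − v_{c,2})`,
`dω₋₁,₂/dt = 2 ω₋₁,₁ ω₋₁,₂/(v_{c,2} − v_{c,1})`, with the prescribed initial values. -/
theorem stmt16 (ν : ℝ) (w0 v10 v20 : ℂ) (hne : v10 ≠ v20) (T : ℝ) (hT : 0 < T)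
    (hbranch : ∀ t ∈ Set.Ico (0 : ℝ) T,
      ¬((radicand w0 (v10 - v20) t).im = 0 ∧ (radicand w0 (v10 - v20) t).re ≤ 0))
    (hsep : ∀ t ∈ Set.Ico (0 : ℝ) T,
      vcOne ν w0 v10 v20 t ≠ vcTwo ν w0 v10 v20 t) :
    omOne w0 (v10 - v20) 0 = w0 ∧
    (-(omOne w0 (v10 - v20) 0)) = -w0 ∧
    vcOne ν w0 v10 v20 0 = v10 ∧
    vcTwo ν w0 v10 v20 0 = v20 ∧
    ∀ t ∈ Set.Ico (0 : ℝ) T,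
      HasDerivWithinAt (vcOne ν w0 v10 v20)
        ((ν : ℂ) + omOne w0 (v10 - v20) t) (Set.Ico (0 : ℝ) T) t ∧
      HasDerivWithinAt (vcTwo ν w0 v10 v20)
        ((ν : ℂ) + -(omOne w0 (v10 - v20) t)) (Set.Ico (0 : ℝ) T) t ∧
      HasDerivWithinAt (omOne w0 (v10 - v20))
        (2 * omOne w0 (v10 - v20) t * (-(omOne w0 (v10 - v20) t)) /
          (vcOne ν w0 v10 v20 t - vcTwo ν w0 v10 v20 t)) (Set.Ico (0 : ℝ) T) t ∧
      HasDerivWithinAt (fun s : ℝ => -(omOne w0 (v10 - v20) s))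
        (2 * omOne w0 (v10 - v20) t * (-(omOne w0 (v10 - v20) t)) /
          (vcTwo ν w0 v10 v20 t - vcOne ν w0 v10 v20 t)) (Set.Ico (0 : ℝ) T) t :=
  stmt16_general ν w0 v10 v20 hne T hbranch

end
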